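/- Let g be a finite-dimensional real Lie algebra and φ a Lie algebra automorphism of g; set A = φ − id, h = ker A, m = A(g), and assume g = h ⊕ m (regularity). Then m is φ-invariant; let θ = φ|_m. Let ⟨·,·⟩ be an inner product on m that is naturally reductive and θ-invariant (⟨θX, θY⟩ = ⟨X,Y⟩ for all X,Y ∈ m). Let f = p(θ) for some real polynomial p, and suppose f is a metric f-structure satisfying f² = θf or f² = −θf. Then, with (∇_X f)(Y) = ½([X, fY]_m − f([X,Y]_m)), one has (∇_{fX} f)(fX) = 0 for all X ∈ m. (A canonical metric f-structure with f² = ±θf on a regular Φ-space with naturally reductive metric is a nearly Kähler f-structure.) -/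

import Mathlib

/-!
Write `Y = fX`. Since `f` is a polynomial in `θ`, it commutes with `θ`, so `f³ = -f` together with
`f² = ±θf` makes `θ` act on the pair `(Y, fY)` as the rotation `(Y, fY) ↦ ±(fY, -Y)`. The
automorphism `φ` therefore fixes `⁅Y, fY⁆`; as `φ` also fixes `h` pointwise, the projection to `m`
along `h` commutes with `φ`, so `⁅Y, fY⁆_m` is a fixed point of `θ` in `m`. Fixed points of `φ`
lie in `h = ker (φ - id)`, and `h ∩ m = 0`, hence `⁅Y, fY⁆_m = 0`. Since also `⁅Y, Y⁆ = 0`, this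
is `(∇_Y f)(Y) = 0`.
-/

namespace Submodule

variable {R M : Type*} [CommRing R] [AddCommGroup M] [Module R M] {m h : Submodule R M}
  {φ : M →ₗ[R] M} {θ : m →ₗ[R] m}

theorem projectionOnto_map_eq_of_mapsTo (hc : IsCompl m h) (hφ : ∀ w ∈ h, φ w ∈ h)
    (hθ : ∀ X : m, (θ X : M) = φ X) (v : M) :
    m.projectionOnto h hc (φ v) = θ (m.projectionOnto h hc v) := by
  have hv : v - m.projectionOnto h hc v ∈ h := by
    simpa [coe_projectionOnto_apply] using sub_projection_mem hc v
  have hsplit : φ v = θ (m.projectionOnto h hc v) + φ (v - m.projectionOnto h hc v) := by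
    rw [hθ, ← map_add, add_sub_cancel]
  rw [hsplit, map_add, projectionOnto_apply_left, projectionOnto_apply_of_mem_right hc (hφ _ hv),
    add_zero]

theorem eq_zero_of_apply_eq_self (hc : IsCompl m h) (hfix : ∀ w, φ w = w → w ∈ h)
    (hθ : ∀ X : m, (θ X : M) = φ X) {X : m} (hX : θ X = X) : X = 0 := by
  have hXh : (X : M) ∈ h := hfix _ (by rw [← hθ, hX])
  exact Subtype.ext (disjoint_def.1 hc.disjoint _ X.2 hXh)

end Submodule

namespace Module.End

variable {R M : Type*} [CommRing R] [AddCommGroup M] [Module R M]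

theorem commute_aeval_self (θ : Module.End R M) (p : Polynomial R) :
    Commute θ (Polynomial.aeval θ p) := by
  simpa using (Commute.all Polynomial.X p).map (Polynomial.aeval θ)

theorem apply_rotation_of_sq_eq_mul {θ f : Module.End R M} (hcomm : Commute θ f)
    (hf3 : ∀ X, f (f (f X)) + f X = 0)
    (hsq : (∀ X, f (f X) = θ (f X)) ∨ (∀ X, f (f X) = -θ (f X))) (X : M) :
    (θ (f X) = f (f X) ∧ θ (f (f X)) = -f X) ∨ (θ (f X) = -f (f X) ∧ θ (f (f X)) = f X) := by
  have hθf : θ (f (f X)) = f (θ (f X)) := LinearMap.congr_fun hcomm.eq (f X)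
  have hf3X : f (f (f X)) = -f X := eq_neg_of_add_eq_zero_left (hf3 X)
  rcases hsq with hsq | hsq
  · left
    exact ⟨(hsq X).symm, by rw [hθf, ← hsq, hf3X]⟩
  · right
    have hθfX : θ (f X) = -f (f X) := by rw [hsq, neg_neg]
    exact ⟨hθfX, by rw [hθf, hθfX, map_neg, hf3X, neg_neg]⟩

end Module.End

theorem LieEquiv.projectionOnto_lie_fixed_of_rotation {R L : Type*} [CommRing R] [LieRing L]
    [LieAlgebra R L] {m h : Submodule R L} (hc : IsCompl m h) (φ : L ≃ₗ⁅R⁆ L)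
    (hφ : ∀ w ∈ h, φ w ∈ h) {θ : m →ₗ[R] m} (hθ : ∀ X : m, (θ X : L) = φ X) {Y Y' : m}
    (hrot : (θ Y = Y' ∧ θ Y' = -Y) ∨ (θ Y = -Y' ∧ θ Y' = Y)) :
    θ (m.projectionOnto h hc ⁅(Y : L), (Y' : L)⁆) = m.projectionOnto h hc ⁅(Y : L), (Y' : L)⁆ := by
  have hbracket : φ ⁅(Y : L), (Y' : L)⁆ = ⁅(Y : L), (Y' : L)⁆ := by
    rw [LieEquiv.map_lie, ← hθ, ← hθ]
    rcases hrot with ⟨hY, hY'⟩ | ⟨hY, hY'⟩ <;>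
      simp only [hY, hY', Submodule.coe_neg, lie_neg, neg_lie, lie_skew]
  calc θ (m.projectionOnto h hc ⁅(Y : L), (Y' : L)⁆)
      = m.projectionOnto h hc (φ ⁅(Y : L), (Y' : L)⁆) :=
        (Submodule.projectionOnto_map_eq_of_mapsTo hc hφ hθ (φ := φ.toLieHom) _).symm
    _ = m.projectionOnto h hc ⁅(Y : L), (Y' : L)⁆ := by rw [hbracket]

theorem stmt_17 (g : Type*) [LieRing g] [LieAlgebra ℝ g]
    (φ : g ≃ₗ⁅ℝ⁆ g)
    (A : g →ₗ[ℝ] g) (hA : A = (φ.toLieHom : g →ₗ[ℝ] g) - LinearMap.id)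
    (h m : Submodule ℝ g) (hh : h = LinearMap.ker A)
    -- regularity: g = h ⊕ m
    (hc : IsCompl h m)
    -- θ = φ|_m (m is φ-invariant)
    (θ : m →ₗ[ℝ] m) (hθ : ∀ X : m, (θ X : g) = φ X)
    -- f is a canonical metric f-structure: a polynomial in θ
    (f : m →ₗ[ℝ] m) (p : Polynomial ℝ) (hfp : f = Polynomial.aeval θ p)
    (hf3 : ∀ X : m, f (f (f X)) + f X = 0)
    -- f² = θf or f² = −θf
    (hfsq : (∀ X : m, f (f X) = θ (f X)) ∨ (∀ X : m, f (f X) = -θ (f X)))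
    -- the covariant derivative
    (nabla : m → m → m)
    (hnabla : ∀ X Y : m, nabla X Y = (1 / 2 : ℝ) •
      (m.linearProjOfIsCompl h hc.symm ⁅(X : g), (f Y : g)⁆ -
        f (m.linearProjOfIsCompl h hc.symm ⁅(X : g), (Y : g)⁆))) :
    ∀ X : m, nabla (f X) (f X) = 0 := by
  intro X
  have hmem_h : ∀ w, w ∈ h ↔ φ w = w := fun w => by
    simp [hh, hA, sub_eq_zero]
  have hrot := Module.End.apply_rotation_of_sq_eq_mul
    (hfp ▸ Module.End.commute_aeval_self θ p) hf3 hfsq X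
  have hfixed := φ.projectionOnto_lie_fixed_of_rotation hc.symm
    (fun w hw => by rwa [(hmem_h w).1 hw]) hθ hrot
  have hzero := Submodule.eq_zero_of_apply_eq_self hc.symm (φ := φ.toLieHom)
    (fun w hw => (hmem_h w).2 hw) hθ hfixed
  rw [hnabla, lie_self, map_zero, map_zero, sub_zero]
  exact (congrArg _ hzero).trans (smul_zero _)
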